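/- Suppose there exists c₂ > 1 with c₂ m_ν(y) ≤ m_ν(x) for every x ∈ T and y ∈ s(x). Then for every α > 0 there exists a constant C_α, depending only on α and c₂, such that Σ_{x ∈ T_v} m_ν(x)^{1+α} ≤ C_α m_ν(v)^{1+α} for every v ∈ T. -/

import Mathlib

/-!
Write `m = m_ν` and `r = c₂^{-α} < 1`. Iterating the decay hypothesis along the path from
`x ∈ T_v` up to `v` gives `m(x) ≤ c₂^{-n} m(v)` when `x` lies `n` levels below `v`, hence
`m(x)^{1+α} ≤ rⁿ m(v)^α m(x)`. The sectors `∂T_x` of the vertices `n` levels below `v` are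
disjoint subsets of `∂T_v`, so their masses add up to at most `m(v)`. Summing level by level
bounds the whole sum by `Σₙ rⁿ m(v)^{1+α} = (1 - r)⁻¹ m(v)^{1+α}`.
-/

open MeasureTheory
open scoped ENNReal NNReal

/-- The punctured boundary `∂T` of the tree: maps `ω : ℤ → T` with `lev (ω j) = j`
and `par (ω j) = ω (j+1)`. -/
def PBoundary {T : Type*} (par : T → T) (lev : T → ℤ) : Type _ :=
  {ω : ℤ → T // (∀ j : ℤ, lev (ω j) = j) ∧ ∀ j : ℤ, par (ω j) = ω (j + 1)}

/-- The boundary sector `∂T_x`. -/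
def sector {T : Type*} (par : T → T) (lev : T → ℤ) (x : T) : Set (PBoundary par lev) :=
  {ω : PBoundary par lev | ω.1 (lev x) = x}

/-- The σ-algebra on `∂T` generated by the sectors. -/
instance {T : Type*} (par : T → T) (lev : T → ℤ) : MeasurableSpace (PBoundary par lev) :=
  MeasurableSpace.generateFrom (Set.range (sector par lev))

/-- The flow measure `m_ν x = ν (∂T_x)` (as a real number). -/
noncomputable def mnu {T : Type*} (par : T → T) (lev : T → ℤ)
    (ν : Measure (PBoundary par lev)) (x : T) : ℝ :=
  (ν (sector par lev x)).toReal

/-- The sector `T_x = {y ∈ T : y lies below x}`. -/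
def tsector {T : Type*} (par : T → T) (x : T) : Set T :=
  {y : T | ∃ n : ℕ, par^[n] y = x}

universe u

theorem Finset.sum_le_inv_one_sub_mul_of_level_sum_le {ι : Type*} (F : Finset ι) (d : ι → ℕ)
    {g w : ι → ℝ} {r M : ℝ} (hr₀ : 0 ≤ r) (hr₁ : r < 1) (hM : 0 ≤ M)
    (hg : ∀ x ∈ F, g x ≤ r ^ d x * w x) (hlevel : ∀ n, ∑ x ∈ F with d x = n, w x ≤ M) :
    ∑ x ∈ F, g x ≤ (1 - r)⁻¹ * M := by
  have hgeom : ∑ n ∈ F.image d, r ^ n ≤ (1 - r)⁻¹ := by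
    rw [← tsum_geometric_of_lt_one hr₀ hr₁]
    exact Summable.sum_le_tsum _ (fun n _ => pow_nonneg hr₀ n)
      (summable_geometric_of_lt_one hr₀ hr₁)
  calc ∑ x ∈ F, g x
      ≤ ∑ x ∈ F, r ^ d x * w x := Finset.sum_le_sum hg
    _ = ∑ n ∈ F.image d, r ^ n * ∑ x ∈ F with d x = n, w x := by
        rw [← Finset.sum_fiberwise_of_maps_to fun x hx => Finset.mem_image_of_mem d hx]
        refine Finset.sum_congr rfl fun n _ => ?_
        rw [Finset.mul_sum]
        exact Finset.sum_congr rfl fun x hx => by rw [(Finset.mem_filter.1 hx).2]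
    _ ≤ ∑ n ∈ F.image d, r ^ n * M :=
        Finset.sum_le_sum fun n _ => mul_le_mul_of_nonneg_left (hlevel n) (pow_nonneg hr₀ n)
    _ = (∑ n ∈ F.image d, r ^ n) * M := (Finset.sum_mul _ _ _).symm
    _ ≤ (1 - r)⁻¹ * M := mul_le_mul_of_nonneg_right hgeom hM

theorem Real.rpow_one_add_le_of_le_pow_mul {a b q α : ℝ} (ha : 0 ≤ a) (hb : 0 ≤ b) (hq : 0 ≤ q)
    (hα : 0 ≤ α) (n : ℕ) (h : a ≤ q ^ n * b) :
    a ^ (1 + α) ≤ (q ^ α) ^ n * (b ^ α * a) := by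
  have hpow : a ^ α ≤ (q ^ α) ^ n * b ^ α := by
    calc a ^ α ≤ (q ^ n * b) ^ α := Real.rpow_le_rpow ha h hα
      _ = (q ^ α) ^ n * b ^ α := by
        rw [Real.mul_rpow (pow_nonneg hq n) hb, Real.rpow_pow_comm hq]
  calc a ^ (1 + α) = a * a ^ α := by
        rw [Real.rpow_add' ha (by positivity), Real.rpow_one]
    _ ≤ a * ((q ^ α) ^ n * b ^ α) := mul_le_mul_of_nonneg_left hpow ha
    _ = (q ^ α) ^ n * (b ^ α * a) := by ring

theorem pow_mul_le_apply_iterate {T : Type*} {par : T → T} {m : T → ℝ} {c : ℝ} (hc : 0 ≤ c)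
    (hstep : ∀ y, c * m y ≤ m (par y)) (n : ℕ) (x : T) : c ^ n * m x ≤ m (par^[n] x) := by
  induction n with
  | zero => simp
  | succ n ih =>
    rw [Function.iterate_succ_apply']
    calc c ^ (n + 1) * m x = c * (c ^ n * m x) := by ring
      _ ≤ c * m (par^[n] x) := mul_le_mul_of_nonneg_left ih hc
      _ ≤ m (par (par^[n] x)) := hstep _

section Tree

variable {T : Type*} {par : T → T} {lev : T → ℤ}

theorem lev_iterate (hlev : ∀ x, lev (par x) = lev x + 1) (n : ℕ) (x : T) :
    lev (par^[n] x) = lev x + n := by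
  induction n with
  | zero => simp
  | succ n ih =>
    rw [Function.iterate_succ_apply', hlev, ih]
    push_cast
    ring

theorem PBoundary.val_add_natCast (ω : PBoundary par lev) (j : ℤ) (n : ℕ) :
    ω.1 (j + n) = par^[n] (ω.1 j) := by
  induction n with
  | zero => simp
  | succ n ih =>
    rw [Function.iterate_succ_apply', ← ih, ω.2.2 (j + n)]
    push_cast
    ring_nf

theorem sector_subset_sector_iterate (hlev : ∀ x, lev (par x) = lev x + 1) (n : ℕ) (x : T) :
    sector par lev x ⊆ sector par lev (par^[n] x) := by
  intro ω (hω : ω.1 (lev x) = x)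
  change ω.1 (lev (par^[n] x)) = par^[n] x
  rw [lev_iterate hlev, PBoundary.val_add_natCast, hω]

theorem disjoint_sector_of_lev_eq {x y : T} (hl : lev x = lev y) (hxy : x ≠ y) :
    Disjoint (sector par lev x) (sector par lev y) :=
  Set.disjoint_left.2 fun ω (hx : ω.1 (lev x) = x) (hy : ω.1 (lev y) = y) =>
    hxy (by rw [← hx, hl, hy])

theorem measurableSet_sector (x : T) : MeasurableSet (sector par lev x) :=
  MeasurableSpace.measurableSet_generateFrom (Set.mem_range_self x)

theorem iterate_toNat_sub_lev_eq (hlev : ∀ x, lev (par x) = lev x + 1) {x v : T}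
    (hx : x ∈ tsector par v) : par^[(lev v - lev x).toNat] x = v := by
  obtain ⟨n, hn⟩ := hx
  have hlev_v : lev v = lev x + n := hn ▸ lev_iterate hlev n x
  rwa [show (lev v - lev x).toNat = n by omega]

theorem sum_measure_sector_le (hlev : ∀ x, lev (par x) = lev x + 1)
    (ν : Measure (PBoundary par lev)) {ι : Type*} (s : Finset ι) {f : ι → T}
    (hf : Function.Injective f) (n : ℕ) (v : T) (hfv : ∀ i ∈ s, par^[n] (f i) = v) :
    ∑ i ∈ s, ν (sector par lev (f i)) ≤ ν (sector par lev v) := by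
  have hdisj : (s : Set ι).PairwiseDisjoint fun i => sector par lev (f i) := by
    intro i hi j hj hij
    refine disjoint_sector_of_lev_eq ?_ (hf.ne hij)
    have hi' := lev_iterate hlev n (f i)
    have hj' := lev_iterate hlev n (f j)
    rw [hfv i hi] at hi'
    rw [hfv j hj] at hj'
    omega
  rw [← measure_biUnion_finset hdisj fun i _ => measurableSet_sector (f i)]
  refine measure_mono (Set.iUnion₂_subset fun i hi => ?_)
  exact hfv i hi ▸ sector_subset_sector_iterate hlev n (f i)

theorem mnu_nonneg (ν : Measure (PBoundary par lev)) (x : T) : 0 ≤ mnu par lev ν x :=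
  ENNReal.toReal_nonneg

theorem sum_mnu_le (hlev : ∀ x, lev (par x) = lev x + 1) {ν : Measure (PBoundary par lev)}
    (hν : ∀ x, ν (sector par lev x) ≠ ⊤) {ι : Type*} (s : Finset ι) {f : ι → T}
    (hf : Function.Injective f) (n : ℕ) (v : T) (hfv : ∀ i ∈ s, par^[n] (f i) = v) :
    ∑ i ∈ s, mnu par lev ν (f i) ≤ mnu par lev ν v := by
  unfold mnu
  rw [← ENNReal.toReal_sum fun i _ => hν (f i)]
  exact ENNReal.toReal_mono (hν v) (sum_measure_sector_le hlev ν s hf n v hfv)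

theorem sum_mnu_rpow_le (hlev : ∀ x, lev (par x) = lev x + 1) {ν : Measure (PBoundary par lev)}
    (hν : ∀ x, ν (sector par lev x) ≠ ⊤) {c α : ℝ} (hc : 1 < c) (hα : 0 < α)
    (hstep : ∀ y, c * mnu par lev ν y ≤ mnu par lev ν (par y)) (v : T)
    (F : Finset (tsector par v)) :
    ∑ x ∈ F, mnu par lev ν x ^ (1 + α) ≤ (1 - c⁻¹ ^ α)⁻¹ * mnu par lev ν v ^ (1 + α) := by
  set m := mnu par lev ν
  have hc₀ : 0 < c := by linarith
  have hm : ∀ x, 0 ≤ m x := mnu_nonneg ν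
  set d : tsector par v → ℕ := fun x => (lev v - lev x.1).toNat
  have hdepth : ∀ x : tsector par v, par^[d x] x = v := fun x =>
    iterate_toNat_sub_lev_eq hlev x.2
  have hdecay : ∀ x : tsector par v, m x ≤ c⁻¹ ^ d x * m v := by
    intro x
    have hchain := pow_mul_le_apply_iterate hc₀.le hstep (d x) x
    rw [hdepth x] at hchain
    rwa [inv_pow, inv_mul_eq_div, le_div_iff₀ (pow_pos hc₀ _), mul_comm]
  have hr₁ : c⁻¹ ^ α < 1 := Real.rpow_lt_one (by positivity) (inv_lt_one_of_one_lt₀ hc) hα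
  rw [Real.rpow_add' (hm v) (by positivity), Real.rpow_one, mul_comm (m v)]
  refine Finset.sum_le_inv_one_sub_mul_of_level_sum_le F d (w := fun x => m v ^ α * m x)
    (by positivity) hr₁
    (mul_nonneg (Real.rpow_nonneg (hm v) _) (hm v))
    (fun x _ => Real.rpow_one_add_le_of_le_pow_mul (hm x) (hm v) (by positivity) hα.le _
      (hdecay x)) fun n => ?_
  rw [← Finset.mul_sum]
  refine mul_le_mul_of_nonneg_left ?_ (Real.rpow_nonneg (hm v) α)
  exact sum_mnu_le hlev hν _ Subtype.val_injective n v fun x hx =>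
    (Finset.mem_filter.1 hx).2 ▸ hdepth x

end Tree

/-- If `c₂ m_ν(y) ≤ m_ν(x)` for every `y ∈ s(x)` with `c₂ > 1`, then for
every `α > 0` there is `C_α` (depending only on `α` and `c₂`) with
`Σ_{x ∈ T_v} m_ν(x)^{1+α} ≤ C_α m_ν(v)^{1+α}` for every `v ∈ T`. -/
theorem stmt17 (c₂ : ℝ) (hc₂ : 1 < c₂) (α : ℝ) (hα : 0 < α) :
    ∃ C : ℝ, 0 < C ∧
      ∀ (T : Type u) (par : T → T) (lev : T → ℤ),
        Nonempty T →
        (∀ x : T, lev (par x) = lev x + 1) →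
        (∀ x : T, {y : T | par y = x}.Finite) →
        (∀ x : T, ∃ y : T, par y = x) →
        (∀ x y : T, ∃ n m : ℕ, par^[n] x = par^[m] y) →
        ∀ ν : Measure (PBoundary par lev),
          (∀ x : T, 0 < ν (sector par lev x) ∧ ν (sector par lev x) < ⊤) →
          (∀ x y : T, par y = x → c₂ * mnu par lev ν y ≤ mnu par lev ν x) →
          ∀ v : T,
            ∑' x : tsector par v, ENNReal.ofReal (mnu par lev ν x.1 ^ (1 + α))
              ≤ ENNReal.ofReal (C * mnu par lev ν v ^ (1 + α)) := by
  have hr₁ : c₂⁻¹ ^ α < 1 :=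
    Real.rpow_lt_one (by positivity) (inv_lt_one_of_one_lt₀ hc₂) hα
  refine ⟨(1 - c₂⁻¹ ^ α)⁻¹, inv_pos.2 (by linarith), ?_⟩
  intro T par lev _ hlev _ _ _ ν hν hstep v
  rw [ENNReal.tsum_eq_iSup_sum]
  refine iSup_le fun F => ?_
  rw [← ENNReal.ofReal_sum_of_nonneg fun x _ => Real.rpow_nonneg (mnu_nonneg ν x.1) _]
  exact ENNReal.ofReal_le_ofReal <| sum_mnu_rpow_le hlev (fun x => (hν x).2.ne) hc₂ hα
    (fun y => hstep _ y rfl) v F
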